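/- Let L be an abstract logic, L' a fragment of L, 𝒞 a class of L-models, Θ = (Θ_M)_{M∈𝒞} an (L,𝒞)-pair, S ⊆ 𝒞 a finite set of L-models, and R an (L,S)-learning property. If some final L'-formula belongs to R, then some final L'-formula of size at most n^S_Θ := Σ_{τ∈𝒯} Π_{M∈S} |SEM_M(τ)| belongs to R. -/

import Mathlib

open scoped Classical

/-- The syntax of an abstract logic: a finite non-empty set of formula types `T`
with a non-empty set `Tf` of final types, and operator sets of arities 0, 1, 2
(with `Op0` non-empty), each operator having a type and allowed argument types. -/
structure AbsLogic where
  T : Type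
  [fintypeT : Fintype T]
  neT : Nonempty T
  Tf : Set T
  neTf : Tf.Nonempty
  Op0 : Type
  Op1 : Type
  Op2 : Type
  neOp0 : Nonempty Op0
  ty0 : Op0 → T
  ty1 : Op1 → T
  ty2 : Op2 → T
  arg1 : Op1 → Set T
  arg21 : Op2 → Set T
  arg22 : Op2 → Set T

attribute [instance] AbsLogic.fintypeT

/-- (Raw) formulas of an abstract logic. -/
inductive Fm (L : AbsLogic) : Type
  | op0 : L.Op0 → Fm L
  | op1 : L.Op1 → Fm L → Fm L
  | op2 : L.Op2 → Fm L → Fm L → Fm L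

namespace Fm

variable {L : AbsLogic}

/-- The type of a formula. -/
def typeOf : Fm L → L.T
  | op0 o => L.ty0 o
  | op1 o _ => L.ty1 o
  | op2 o _ _ => L.ty2 o

/-- Well-typedness: arguments of operators have allowed types. -/
def WT : Fm L → Prop
  | op0 _ => True
  | op1 o φ => WT φ ∧ typeOf φ ∈ L.arg1 o
  | op2 o φ ψ => WT φ ∧ WT ψ ∧ typeOf φ ∈ L.arg21 o ∧ typeOf ψ ∈ L.arg22 o

/-- The set of subformulas of a formula. -/
def Sub : Fm L → Set (Fm L)
  | op0 o => {op0 o}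
  | op1 o φ => insert (op1 o φ) (Sub φ)
  | op2 o φ ψ => insert (op2 o φ ψ) (Sub φ ∪ Sub ψ)

/-- The (syntax-DAG) size of a formula: its number of distinct subformulas. -/
noncomputable def sz (φ : Fm L) : ℕ := (Sub φ).ncard

end Fm

/-- A fragment of a logic: a subset of the operators of each arity. -/
structure Fragment (L : AbsLogic) where
  F0 : Set L.Op0
  F1 : Set L.Op1
  F2 : Set L.Op2

/-- A formula uses only operators of the fragment. -/
def InFrag {L : AbsLogic} (Fr : Fragment L) : Fm L → Prop
  | .op0 o => o ∈ Fr.F0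
  | .op1 o φ => o ∈ Fr.F1 ∧ InFrag Fr φ
  | .op2 o φ ψ => o ∈ Fr.F2 ∧ InFrag Fr φ ∧ InFrag Fr ψ

/-- A formula of the fragment `Fr`: well-typed, built from operators of `Fr`. -/
def IsFmOf {L : AbsLogic} (Fr : Fragment L) (φ : Fm L) : Prop := φ.WT ∧ InFrag Fr φ

/-- A class of `L`-models: structures with a satisfaction relation for formulas. -/
structure ModelClass (L : AbsLogic) where
  Model : Type
  sat : Model → Fm L → Prop

/-- An `(L,𝒞)`-pair: for every model `M`, a finite set of semantic values
`SEM M = ⋃ τ, SEM M τ` (pairwise disjoint over types) and a type-respecting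
semantic function `sem M`, which captures the `L`-semantics and satisfies the
inductive property. -/
structure LCPair (L : AbsLogic) (C : ModelClass L) where
  V : C.Model → Type
  SEM : (M : C.Model) → L.T → Set (V M)
  sem : (M : C.Model) → Fm L → V M
  finite_SEM : ∀ M τ, (SEM M τ).Finite
  disj_SEM : ∀ M (τ τ' : L.T), τ ≠ τ' → Disjoint (SEM M τ) (SEM M τ')
  typed : ∀ (M : C.Model) (φ : Fm L), φ.WT → sem M φ ∈ SEM M φ.typeOf
  captures : ∀ (M : C.Model) (φ φ' : Fm L), φ.WT → φ'.WT → φ.typeOf = φ'.typeOf →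
    φ.typeOf ∈ L.Tf → sem M φ = sem M φ' → (C.sat M φ ↔ C.sat M φ')
  ind1 : ∀ (M : C.Model) (o : L.Op1), ∃ f : V M → V M,
    ∀ φ : Fm L, φ.WT → φ.typeOf ∈ L.arg1 o → sem M (.op1 o φ) = f (sem M φ)
  ind2 : ∀ (M : C.Model) (o : L.Op2), ∃ f : V M → V M → V M,
    ∀ φ ψ : Fm L, φ.WT → ψ.WT → φ.typeOf ∈ L.arg21 o → ψ.typeOf ∈ L.arg22 o →
      sem M (.op2 o φ ψ) = f (sem M φ) (sem M ψ)

/-!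
Take a witness `φ` of minimal size. If two distinct subformulas of `φ` had the same type and the
same semantic values in every model of `S`, replacing the one that does not occur in the other by
the other would, by the inductive property, preserve these semantic values and hence, since `Θ`
captures the semantics and `R` is a learning property, keep the formula in `R`, while strictly
decreasing its number of distinct subformulas. So the subformulas of `φ` are separated by their
type and their semantic values on `S`, and there are at most `∑ τ, ∏ M ∈ S, |SEM M τ|` of those.
-/

namespace Fm

variable {L : AbsLogic}

theorem mem_Sub_self (φ : Fm L) : φ ∈ Sub φ := by
  cases φ <;> simp [Sub]

theorem Sub_finite (φ : Fm L) : (Sub φ).Finite := by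
  induction φ with
  | op0 o => exact Set.finite_singleton _
  | op1 o φ ih => exact ih.insert _
  | op2 o φ ψ ih₁ ih₂ => exact (ih₁.union ih₂).insert _

theorem forall_mem_Sub {P : Fm L → Prop} (h₁ : ∀ o φ, P (op1 o φ) → P φ)
    (h₂ : ∀ o φ ψ, P (op2 o φ ψ) → P φ ∧ P ψ) {φ : Fm L} (hφ : P φ) :
    ∀ ψ ∈ Sub φ, P ψ := by
  induction φ with
  | op0 o => simpa [Sub] using hφ
  | op1 o φ ih => simpa [Sub, hφ] using ih (h₁ o φ hφ)
  | op2 o φ χ ih₁ ih₂ =>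
    obtain ⟨hφ₁, hφ₂⟩ := h₂ o φ χ hφ
    simp only [Sub, Set.mem_insert_iff, Set.mem_union, forall_eq_or_imp]
    exact ⟨hφ, fun ψ h => h.elim (ih₁ hφ₁ ψ) (ih₂ hφ₂ ψ)⟩

theorem Sub_subset_Sub {ψ φ : Fm L} (h : ψ ∈ Sub φ) : Sub ψ ⊆ Sub φ :=
  forall_mem_Sub (P := fun χ => Sub χ ⊆ Sub φ)
    (fun _ _ h => (Set.subset_insert _ _).trans h)
    (fun _ _ _ h => ⟨(Set.subset_union_left.trans (Set.subset_insert _ _)).trans h,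
      (Set.subset_union_right.trans (Set.subset_insert _ _)).trans h⟩)
    subset_rfl ψ h

theorem WT.of_mem_Sub {ψ φ : Fm L} (hφ : φ.WT) (h : ψ ∈ Sub φ) : ψ.WT :=
  forall_mem_Sub (fun _ _ h => h.1) (fun _ _ _ h => ⟨h.1, h.2.1⟩) hφ ψ h

theorem InFrag.of_mem_Sub {Fr : Fragment L} {ψ φ : Fm L} (hφ : InFrag Fr φ)
    (h : ψ ∈ Sub φ) : InFrag Fr ψ :=
  forall_mem_Sub (fun _ _ h => h.2) (fun _ _ _ h => h.2) hφ ψ h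

theorem sizeOf_le_of_mem_Sub {ψ φ : Fm L} (h : ψ ∈ Sub φ) : sizeOf ψ ≤ sizeOf φ :=
  forall_mem_Sub (P := fun χ => sizeOf χ ≤ sizeOf φ)
    (fun _ _ h => by rw [op1.sizeOf_spec] at h; omega)
    (fun _ _ _ h => by rw [op2.sizeOf_spec] at h; omega) le_rfl ψ h

theorem sizeOf_lt_of_mem_Sub_of_ne {ψ φ : Fm L} (h : ψ ∈ Sub φ) (hne : ψ ≠ φ) :
    sizeOf ψ < sizeOf φ := by
  cases φ with
  | op0 o => exact absurd h hne
  | op1 o φ =>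
    have := sizeOf_le_of_mem_Sub ((Set.mem_insert_iff.mp h).resolve_left hne)
    rw [op1.sizeOf_spec]; omega
  | op2 o φ χ =>
    rcases (Set.mem_insert_iff.mp h).resolve_left hne with h | h <;>
    · have := sizeOf_le_of_mem_Sub h
      rw [op2.sizeOf_spec]; omega

theorem eq_of_mem_Sub_of_mem_Sub {α β : Fm L} (hα : α ∈ Sub β) (hβ : β ∈ Sub α) : α = β := by
  by_contra hne
  have := sizeOf_lt_of_mem_Sub_of_ne hα hne
  have := sizeOf_lt_of_mem_Sub_of_ne hβ (Ne.symm hne)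
  omega

/-- `subst β α φ` replaces every occurrence of the subformula `β` in `φ` by `α`. -/
noncomputable def subst (β α : Fm L) : Fm L → Fm L
  | op0 o => if op0 o = β then α else op0 o
  | op1 o φ => if op1 o φ = β then α else op1 o (subst β α φ)
  | op2 o φ ψ => if op2 o φ ψ = β then α else op2 o (subst β α φ) (subst β α ψ)

theorem subst_self (β α : Fm L) : subst β α β = α := by
  cases β <;> simp [subst]

theorem subst_of_notMem_Sub {β α φ : Fm L} (h : β ∉ Sub φ) : subst β α φ = φ := by
  induction φ with
  | op0 o => rw [subst, if_neg (by rintro rfl; exact h (mem_Sub_self _))]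
  | op1 o φ ih =>
    simp only [Sub, Set.mem_insert_iff, not_or] at h
    rw [subst, if_neg (Ne.symm h.1), ih h.2]
  | op2 o φ ψ ih₁ ih₂ =>
    simp only [Sub, Set.mem_insert_iff, Set.mem_union, not_or] at h
    rw [subst, if_neg (Ne.symm h.1), ih₁ h.2.1, ih₂ h.2.2]

section

variable {β α : Fm L}

theorem typeOf_subst (hty : α.typeOf = β.typeOf) (φ : Fm L) :
    (subst β α φ).typeOf = φ.typeOf := by
  cases φ <;> simp only [subst] <;> split_ifs with h <;> first | rfl | rw [hty, h]

theorem WT_subst (hty : α.typeOf = β.typeOf) (hα : α.WT) {φ : Fm L} (hφ : φ.WT) :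
    (subst β α φ).WT := by
  induction φ with
  | op0 o => simp only [subst]; split_ifs <;> assumption
  | op1 o φ ih =>
    simp only [subst]; split_ifs
    · exact hα
    · exact ⟨ih hφ.1, typeOf_subst hty φ ▸ hφ.2⟩
  | op2 o φ ψ ih₁ ih₂ =>
    simp only [subst]; split_ifs
    · exact hα
    · exact ⟨ih₁ hφ.1, ih₂ hφ.2.1, typeOf_subst hty φ ▸ hφ.2.2.1, typeOf_subst hty ψ ▸ hφ.2.2.2⟩

theorem InFrag_subst {Fr : Fragment L} (hα : InFrag Fr α) {φ : Fm L} (hφ : InFrag Fr φ) :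
    InFrag Fr (subst β α φ) := by
  induction φ with
  | op0 o => simp only [subst]; split_ifs <;> assumption
  | op1 o φ ih =>
    simp only [subst]; split_ifs
    · exact hα
    · exact ⟨hφ.1, ih hφ.2⟩
  | op2 o φ ψ ih₁ ih₂ =>
    simp only [subst]; split_ifs
    · exact hα
    · exact ⟨hφ.1, ih₁ hφ.2.1, ih₂ hφ.2.2⟩

theorem Sub_subst_subset (φ : Fm L) : Sub (subst β α φ) ⊆ subst β α '' Sub φ ∪ Sub α := by
  induction φ with
  | op0 o =>
    simp only [subst]; split_ifs with h
    · exact Set.subset_union_right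
    · simp [Sub, subst, h]
  | op1 o φ ih =>
    simp only [subst]; split_ifs with h
    · exact Set.subset_union_right
    · refine Set.insert_subset_iff.mpr ⟨.inl ⟨op1 o φ, mem_Sub_self _, by rw [subst, if_neg h]⟩, ?_⟩
      exact ih.trans (Set.union_subset_union_left _ (Set.image_mono (Set.subset_insert _ _)))
  | op2 o φ ψ ih₁ ih₂ =>
    simp only [subst]; split_ifs with h
    · exact Set.subset_union_right
    · refine Set.insert_subset_iff.mpr
        ⟨.inl ⟨op2 o φ ψ, mem_Sub_self _, by rw [subst, if_neg h]⟩, Set.union_subset ?_ ?_⟩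
      · exact ih₁.trans (Set.union_subset_union_left _
          (Set.image_mono (Set.subset_union_left.trans (Set.subset_insert _ _))))
      · exact ih₂.trans (Set.union_subset_union_left _
          (Set.image_mono (Set.subset_union_right.trans (Set.subset_insert _ _))))

theorem sz_subst_lt {φ : Fm L} (hα : α ∈ Sub φ) (hβ : β ∈ Sub φ) (hβα : β ∉ Sub α) :
    (subst β α φ).sz < φ.sz := by
  have hfin : (Sub φ \ {β}).Finite := (Sub_finite φ).sdiff
  have hsubset : Sub (subst β α φ) ⊆ subst β α '' (Sub φ \ {β}) := by
    intro χ hχ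
    rcases Sub_subst_subset φ hχ with ⟨ψ, hψ, rfl⟩ | hχα
    · by_cases hψβ : ψ = β
      · subst hψβ
        exact ⟨α, ⟨hα, fun h => hβα (h ▸ mem_Sub_self α)⟩, by
          rw [subst_of_notMem_Sub hβα, subst_self]⟩
      · exact ⟨ψ, ⟨hψ, hψβ⟩, rfl⟩
    · exact ⟨χ, ⟨Sub_subset_Sub hα hχα, fun h => hβα (h ▸ hχα)⟩,
        subst_of_notMem_Sub fun h => hβα (Sub_subset_Sub hχα h)⟩
  calc (subst β α φ).sz ≤ (subst β α '' (Sub φ \ {β})).ncard :=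
        Set.ncard_le_ncard hsubset (hfin.image _)
    _ ≤ (Sub φ \ {β}).ncard := Set.ncard_image_le hfin
    _ < φ.sz := Set.ncard_sdiff_singleton_lt_of_mem hβ (Sub_finite φ)

end

end Fm

theorem IsFmOf.subst {L : AbsLogic} {Fr : Fragment L} {β α φ : Fm L}
    (hty : α.typeOf = β.typeOf) (hα : IsFmOf Fr α) (hφ : IsFmOf Fr φ) :
    IsFmOf Fr (Fm.subst β α φ) :=
  ⟨Fm.WT_subst hty hα.1 hφ.1, Fm.InFrag_subst hα.2 hφ.2⟩

namespace ModelClass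

variable {L : AbsLogic} (C : ModelClass L)

def SatInvariant (S : Finset C.Model) (R : Set (Fm L)) : Prop :=
  ∀ ⦃φ ψ : Fm L⦄, φ.WT → φ.typeOf ∈ L.Tf → ψ ∈ R → (∀ M ∈ S, C.sat M φ ↔ C.sat M ψ) → φ ∈ R

theorem satInvariant_of_learning {S : Finset C.Model} {R : Set (Fm L)}
    (hlearn : ∀ φ : Fm L, φ.WT → φ.typeOf ∈ L.Tf →
      (({M : C.Model | M ∈ S ∧ C.sat M φ} ∈
          {X : Set C.Model | ∃ ψ ∈ R, X = {M : C.Model | M ∈ S ∧ C.sat M ψ}}) ↔ φ ∈ R)) :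
    C.SatInvariant S R := fun φ ψ hφ hφf hψ h =>
  (hlearn φ hφ hφf).mp ⟨ψ, hψ, Set.ext fun M => and_congr_right (h M)⟩

end ModelClass

namespace LCPair

open Fm

variable {L : AbsLogic} {C : ModelClass L} (Θ : LCPair L C)

theorem sem_subst (M : C.Model) {β α : Fm L} (hty : α.typeOf = β.typeOf) (hα : α.WT)
    (hsem : Θ.sem M α = Θ.sem M β) {φ : Fm L} (hφ : φ.WT) :
    Θ.sem M (subst β α φ) = Θ.sem M φ := by
  induction φ with
  | op0 o => simp only [subst]; split_ifs with h <;> simp [hsem, h]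
  | op1 o φ ih =>
    simp only [subst]; split_ifs with h
    · rw [hsem, h]
    · obtain ⟨f, hf⟩ := Θ.ind1 M o
      rw [hf _ (WT_subst hty hα hφ.1) (typeOf_subst hty φ ▸ hφ.2), ih hφ.1, hf _ hφ.1 hφ.2]
  | op2 o φ ψ ih₁ ih₂ =>
    simp only [subst]; split_ifs with h
    · rw [hsem, h]
    · obtain ⟨f, hf⟩ := Θ.ind2 M o
      rw [hf _ _ (WT_subst hty hα hφ.1) (WT_subst hty hα hφ.2.1)
          (typeOf_subst hty φ ▸ hφ.2.2.1) (typeOf_subst hty ψ ▸ hφ.2.2.2),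
        ih₁ hφ.1, ih₂ hφ.2.1, hf _ _ hφ.1 hφ.2.1 hφ.2.2.1 hφ.2.2.2]

theorem sat_subst_iff (M : C.Model) {β α : Fm L} (hty : α.typeOf = β.typeOf) (hα : α.WT)
    (hsem : Θ.sem M α = Θ.sem M β) {φ : Fm L} (hφ : φ.WT) (hfinal : φ.typeOf ∈ L.Tf) :
    C.sat M (subst β α φ) ↔ C.sat M φ :=
  Θ.captures M _ φ (WT_subst hty hα hφ) hφ (typeOf_subst hty φ)
    ((typeOf_subst hty φ).symm ▸ hfinal) (Θ.sem_subst M hty hα hsem hφ)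

theorem ncard_pi_SEM (S : Finset C.Model) (τ : L.T) :
    (Set.univ.pi fun M : S => Θ.SEM M τ).ncard = ∏ M ∈ S, (Θ.SEM M τ).ncard := by
  rw [← Nat.card_coe_set_eq, Nat.card_congr (Equiv.Set.univPi _), Nat.card_pi,
    ← Finset.prod_coe_sort S]
  simp only [Nat.card_coe_set_eq]

def profile (S : Finset C.Model) (ψ : Fm L) : L.T × ((M : S) → Θ.V M) :=
  (ψ.typeOf, fun M => Θ.sem M ψ)

theorem card_le_of_injOn_profile (S : Finset C.Model) {s : Finset (Fm L)}
    (hs : ∀ ψ ∈ s, ψ.WT) (hinj : Set.InjOn (Θ.profile S) s) :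
    s.card ≤ ∑ τ : L.T, ∏ M ∈ S, (Θ.SEM M τ).ncard := by
  rw [Finset.card_eq_sum_card_fiberwise fun ψ _ => Finset.mem_univ ψ.typeOf]
  gcongr with τ
  rw [← Θ.ncard_pi_SEM, ← Set.ncard_coe_finset]
  refine Set.ncard_le_ncard_of_injOn (fun ψ (M : S) => Θ.sem M ψ) ?_ ?_
    (Set.Finite.pi fun M => Θ.finite_SEM M τ)
  · intro ψ hψ M _
    obtain ⟨hψs, rfl⟩ := Finset.mem_filter.mp hψ
    exact Θ.typed M ψ (hs ψ hψs)
  · intro ψ hψ χ hχ h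
    obtain ⟨hψs, hψτ⟩ := Finset.mem_filter.mp hψ
    obtain ⟨hχs, hχτ⟩ := Finset.mem_filter.mp hχ
    exact hinj hψs hχs (Prod.ext (hψτ.trans hχτ.symm) h)

theorem exists_sz_lt_of_not_injOn
    {Fr : Fragment L} {S : Finset C.Model} {R : Set (Fm L)} (hR : C.SatInvariant S R)
    {φ : Fm L} (hφ : IsFmOf Fr φ) (hφf : φ.typeOf ∈ L.Tf) (hφR : φ ∈ R)
    (hinj : ¬ Set.InjOn (Θ.profile S) (Sub φ)) :
    ∃ φ' : Fm L, IsFmOf Fr φ' ∧ φ'.typeOf ∈ L.Tf ∧ φ' ∈ R ∧ φ'.sz < φ.sz := by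
  obtain ⟨α, hα, β, hβ, hprof, hne⟩ : ∃ α ∈ Sub φ, ∃ β ∈ Sub φ,
      Θ.profile S α = Θ.profile S β ∧ α ≠ β := by
    simpa [Set.InjOn] using hinj
  -- Substitute the one of `α`, `β` that does not occur in the other.
  wlog hβα : β ∉ Sub α generalizing α β
  · exact this β hβ α hα hprof.symm hne.symm
      fun hαβ => hne (eq_of_mem_Sub_of_mem_Sub hαβ (not_not.mp hβα))
  obtain ⟨hty, hsem⟩ := Prod.ext_iff.mp hprof
  have hαFr : IsFmOf Fr α := ⟨hφ.1.of_mem_Sub hα, hφ.2.of_mem_Sub hα⟩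
  refine ⟨subst β α φ, hαFr.subst hty hφ, typeOf_subst hty φ ▸ hφf, ?_, sz_subst_lt hα hβ hβα⟩
  exact hR (hαFr.subst hty hφ).1 (typeOf_subst hty φ ▸ hφf) hφR fun M hM =>
    Θ.sat_subst_iff M hty hαFr.1 (congrFun hsem ⟨M, hM⟩) hφ.1 hφf

end LCPair

theorem size_learning_property_general
    (L : AbsLogic) (C : ModelClass L) (Θ : LCPair L C) (Fr : Fragment L)
    (S : Finset C.Model) (R : Set (Fm L))
    (hlearn : ∀ φ : Fm L, φ.WT → φ.typeOf ∈ L.Tf →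
      (({M : C.Model | M ∈ S ∧ C.sat M φ} ∈
          {X : Set C.Model | ∃ ψ ∈ R, X = {M : C.Model | M ∈ S ∧ C.sat M ψ}}) ↔ φ ∈ R)) :
    (∃ φ : Fm L, IsFmOf Fr φ ∧ φ.typeOf ∈ L.Tf ∧ φ ∈ R) →
      ∃ φ : Fm L, IsFmOf Fr φ ∧ φ.typeOf ∈ L.Tf ∧ φ ∈ R ∧
        φ.sz ≤ ∑ τ : L.T, ∏ M ∈ S, (Θ.SEM M τ).ncard := by
  rintro ⟨φ₀, hφ₀⟩
  obtain ⟨φ, ⟨hφ, hφf, hφR⟩, hmin⟩ :=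
    (measure Fm.sz).wf.has_min {φ | IsFmOf Fr φ ∧ φ.typeOf ∈ L.Tf ∧ φ ∈ R} ⟨φ₀, hφ₀⟩
  have hinj : Set.InjOn (Θ.profile S) (Fm.Sub φ) := by
    by_contra hinj
    obtain ⟨φ', hφ', hφ'f, hφ'R, hlt⟩ :=
      Θ.exists_sz_lt_of_not_injOn (C.satInvariant_of_learning hlearn) hφ hφf hφR hinj
    exact hmin φ' ⟨hφ', hφ'f, hφ'R⟩ hlt
  refine ⟨φ, hφ, hφf, hφR, ?_⟩
  rw [Fm.sz, Set.ncard_eq_toFinset_card _ (Fm.Sub_finite φ)]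
  exact Θ.card_le_of_injOn_profile S (fun ψ hψ => hφ.1.of_mem_Sub (by simpa using hψ))
    (by simpa using hinj)

/-- **Theorem (learning properties).** Let `R` be an `(L,S)`-learning property:
a set of final `L`-formulas such that whether a final formula belongs to `R`
depends only on the set of models of `S` satisfying it.  If some final formula of
the fragment `Fr` belongs to `R`, then one of size at most
`∑ τ, ∏_{M ∈ S} |SEM M τ|` does. -/
theorem size_learning_property
    (L : AbsLogic) (C : ModelClass L) (Θ : LCPair L C) (Fr : Fragment L)
    (S : Finset C.Model) (R : Set (Fm L))
    (hRfinal : ∀ φ ∈ R, Fm.WT φ ∧ Fm.typeOf φ ∈ L.Tf)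
    (hlearn : ∀ φ : Fm L, φ.WT → φ.typeOf ∈ L.Tf →
      (({M : C.Model | M ∈ S ∧ C.sat M φ} ∈
          {X : Set C.Model | ∃ ψ ∈ R, X = {M : C.Model | M ∈ S ∧ C.sat M ψ}}) ↔ φ ∈ R)) :
    (∃ φ : Fm L, IsFmOf Fr φ ∧ φ.typeOf ∈ L.Tf ∧ φ ∈ R) →
      ∃ φ : Fm L, IsFmOf Fr φ ∧ φ.typeOf ∈ L.Tf ∧ φ ∈ R ∧
        φ.sz ≤ ∑ τ : L.T, ∏ M ∈ S, (Θ.SEM M τ).ncard :=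
  size_learning_property_general L C Θ Fr S R hlearn
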